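/- arXiv:1312.3178 — 4 statements merged into one kernel-verified Lean document; each statement's English description precedes it below -/
import Mathlib

section
/- Let C be a κ-accessible category with finite products such that the Cartesian product functor preserves κ-filtered colimits separately in each variable. Then an object (X → c) of the slice category C/c is κ-compact in C/c if and only if X is a κ-compact object of C. -/
/-!
STATEMENT 4: Let `C` be κ-accessible with finite products such that the Cartesian
product preserves κ-filtered colimits in each variable. Then an object `X → c` of
`C/c` is κ-compact in `C/c` iff `X` is κ-compact in `C`.
-/

open CategoryTheory CategoryTheory.Limits

universe w v u

/-- A category `J` is `κ`-filtered if every diagram indexed by a category with fewer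
than `κ` morphisms admits a cocone. -/
def IsCardinalFiltered (κ : Cardinal.{w}) (J : Cat.{w, w}) : Prop :=
  ∀ A : Cat.{w, w}, Cardinal.mk (Σ (a : A) (b : A), a ⟶ b) < κ →
    ∀ F : A ⥤ J, Nonempty (Cocone F)

/-- An object `X` is `κ`-compact if `Map(X, -)` preserves `κ`-filtered colimits. -/
def IsCardinalCompact (κ : Cardinal.{w}) {C : Type u} [Category.{v} C] (X : C) : Prop :=
  ∀ J : Cat.{w, w}, IsCardinalFiltered κ J →
    Nonempty (PreservesColimitsOfShape J (coyoneda.obj (Opposite.op X)))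

/-- A category is `κ`-accessible if it has `κ`-filtered colimits, every object is a
`κ`-filtered colimit of `κ`-compact objects, and the `κ`-compact objects form an
essentially small subcategory. -/
def IsCardinalAccessible (κ : Cardinal.{w}) (C : Type u) [Category.{v} C] : Prop :=
  (∀ J : Cat.{w, w}, IsCardinalFiltered κ J → HasColimitsOfShape J C) ∧
  (∀ X : C, ∃ (J : Cat.{w, w}) (F : J ⥤ C) (c : Cocone F),
      Nonempty (IsColimit c) ∧ IsCardinalFiltered κ J ∧
      (∀ j : J, IsCardinalCompact κ (F.obj j)) ∧ Nonempty (c.pt ≅ X)) ∧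
  (∃ (ι : Type w) (G : ι → C), (∀ i, IsCardinalCompact κ (G i)) ∧
      ∀ X : C, IsCardinalCompact κ X → ∃ i, Nonempty (X ≅ G i))

/-! The forgetful functor `C/c ⥤ C` is left adjoint to `c × -`, so `Hom(X, -) ≅ Hom(f, c × -)`;
as `c × -` preserves κ-filtered colimits and the forgetful functor reflects them, κ-compactness of
`f` passes to `X`. Conversely, `Hom_{C/c}(f, g)` is the fibre of `Hom(X, g.left) → Hom(X, c)` over
`f.hom`, and filtered colimits of sets commute with taking such fibres. -/

lemma isFiltered_of_isCardinalFiltered {κ : Cardinal.{w}} (hκ : Cardinal.aleph0 ≤ κ)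
    {J : Cat.{w, w}} (hJ : IsCardinalFiltered κ J) : IsFiltered J := by
  refine IsFiltered.of_cocone_nonempty.{w} _ fun {A} _ _ F => hJ (Cat.of A) ?_ F
  have : Fintype A := FinCategory.fintypeObj
  have : ∀ a b : A, Fintype (a ⟶ b) := FinCategory.fintypeHom
  exact (Cardinal.mk_lt_aleph0_iff (α := Σ (a : A) (b : A), a ⟶ b).mpr inferInstance).trans_le hκ

namespace CategoryTheory

lemma Adjunction.preservesColimitsOfShape_coyoneda_obj_op_obj
    {C : Type u} {D : Type*} [Category.{v} C] [Category.{v} D] {F : C ⥤ D} {G : D ⥤ C}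
    (adj : F ⊣ G) (J : Type*) [Category J] [PreservesColimitsOfShape J G] (X : C)
    [PreservesColimitsOfShape J (coyoneda.obj (Opposite.op X))] :
    PreservesColimitsOfShape J (coyoneda.obj (Opposite.op (F.obj X))) :=
  preservesColimitsOfShape_of_natIso (F := G ⋙ coyoneda.obj (Opposite.op X))
    (adj.compCoyonedaIso.app (Opposite.op X)).symm

namespace Over

variable {C : Type u} [Category.{v} C]

noncomputable def starCompForgetIso [HasBinaryProducts C] (c : C) :
    star c ⋙ forget c ≅ prod.functor.obj c :=
  Iso.refl _

lemma preservesColimitsOfShape_star [HasBinaryProducts C] (c : C) (J : Type*) [Category J]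
    [PreservesColimitsOfShape J (prod.functor.obj c)] :
    PreservesColimitsOfShape J (star c) :=
  have := preservesColimitsOfShape_of_natIso (starCompForgetIso c).symm (J := J)
  preservesColimitsOfShape_of_reflects_of_preserves _ (forget c)

lemma preservesColimitsOfShape_coyoneda_obj {c : C} (f : Over c) (J : Type*) [Category J]
    [IsFiltered J] [PreservesColimitsOfShape J (forget c)]
    [PreservesColimitsOfShape J (coyoneda.obj (Opposite.op f.left))] :
    PreservesColimitsOfShape J (coyoneda.obj (Opposite.op f)) := by
  refine ⟨fun {F} => ⟨fun {s} hs => ⟨?_⟩⟩⟩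
  have ht := isColimitOfPreserves (coyoneda.obj (Opposite.op f.left))
    (isColimitOfPreserves (forget c) hs)
  refine Types.FilteredColimit.isColimitOf _ _ (fun x => ?_) (fun i j xi xj hij => ?_)
  · obtain ⟨j, (y : f.left ⟶ (F.obj j).left), hy⟩ :=
      Types.jointly_surjective_of_isColimit ht x.left
    replace hy : y ≫ (s.ι.app j).left = x.left := hy
    refine ⟨j, homMk y ?_, OverMorphism.ext hy.symm⟩
    rw [← Over.w x, ← hy, Category.assoc]
    exact congrArg (y ≫ ·) (Over.w (s.ι.app j)).symm
  · obtain ⟨k, g, h, hk⟩ := (Types.FilteredColimit.isColimit_eq_iff _ ht).mp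
      (congrArg CommaMorphism.left hij)
    exact ⟨k, g, h, OverMorphism.ext hk⟩

end Over

end CategoryTheory

theorem statement4_general {C : Type u} [Category.{v} C] [HasFiniteProducts C]
    (κ : Cardinal.{w}) (hκ : κ.IsRegular)
    (hprod : ∀ (Y : C) (J : Cat.{w, w}), IsCardinalFiltered κ J →
      Nonempty (PreservesColimitsOfShape J (prod.functor.obj Y)))
    {c : C} (f : Over c) :
    IsCardinalCompact κ f ↔ IsCardinalCompact κ f.left := by
  constructor
  · intro hf J hJ
    have := (hf J hJ).some
    have := (hprod c J hJ).some
    have := Over.preservesColimitsOfShape_star c J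
    exact ⟨(Over.forgetAdjStar c).preservesColimitsOfShape_coyoneda_obj_op_obj J f⟩
  · intro hX J hJ
    have := isFiltered_of_isCardinalFiltered hκ.aleph0_le hJ
    have := (hX J hJ).some
    exact ⟨Over.preservesColimitsOfShape_coyoneda_obj f J⟩

theorem statement4 {C : Type u} [Category.{v} C] [HasFiniteProducts C]
    (κ : Cardinal.{w}) (hκ : κ.IsRegular) (hacc : IsCardinalAccessible κ C)
    (hprod : ∀ (Y : C) (J : Cat.{w, w}), IsCardinalFiltered κ J →
      Nonempty (PreservesColimitsOfShape J (prod.functor.obj Y)))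
    {c : C} (f : Over c) :
    IsCardinalCompact κ f ↔ IsCardinalCompact κ f.left :=
  statement4_general κ hκ hprod f
end

section
/- Let C be a κ-accessible category with finite limits such that the Cartesian product preserves κ-filtered colimits separately in each variable. Then for every morphism f : c → d in C, the pullback (base change) functor f* : C/d → C/c preserves κ-filtered colimits. -/
/-!
Test everything against `κ`-compact objects `G`. Since every object is a `κ`-filtered colimit of
`κ`-compact objects, the functors `Hom(G, -)` jointly reflect isomorphisms, and each of them
preserves `κ`-filtered colimits, which are in particular filtered. As `Hom(G, -)` also turns the
pullback `X ×_d c` into the pullback of hom-sets, the claim reduces to the commutation of filtered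
colimits of sets with pullbacks.
-/

open CategoryTheory CategoryTheory.Limits

universe w v u

open Opposite Cardinal

lemma IsCardinalFiltered.isFiltered {κ : Cardinal.{w}} (hκ : ℵ₀ ≤ κ) {J : Cat.{w, w}}
    (hJ : IsCardinalFiltered κ J) : IsFiltered J :=
  IsFiltered.of_cocone_nonempty.{w} J fun {A} _ _ F =>
    hJ (Cat.of A) ((lt_aleph0_of_finite (Σ (a : A) (b : A), a ⟶ b)).trans_le hκ) F

namespace IsCardinalAccessible

variable {κ : Cardinal.{w}} {C : Type u} [Category.{v} C]

lemma hom_ext (hacc : IsCardinalAccessible κ C) {X Y : C} {g₁ g₂ : X ⟶ Y}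
    (h : ∀ G, IsCardinalCompact κ G → ∀ x : G ⟶ X, x ≫ g₁ = x ≫ g₂) : g₁ = g₂ := by
  obtain ⟨J, F, c, ⟨hc⟩, -, hcpt, ⟨e⟩⟩ := hacc.2.1 X
  have : e.hom ≫ g₁ = e.hom ≫ g₂ :=
    hc.hom_ext fun j => by simpa using h _ (hcpt j) (c.ι.app j ≫ e.hom)
  exact (cancel_epi e.hom).1 this

lemma isIso_of_isIso_coyoneda_map (hacc : IsCardinalAccessible κ C) {A B : C} (θ : A ⟶ B)
    (h : ∀ G, IsCardinalCompact κ G → IsIso ((coyoneda.obj (op G)).map θ)) : IsIso θ := by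
  have hbij (G) (hG : IsCardinalCompact κ G) : Function.Bijective (fun x : G ⟶ A => x ≫ θ) :=
    (isIso_iff_bijective _).1 (h G hG)
  have : Mono θ := ⟨fun g₁ g₂ hg => hacc.hom_ext fun G hG x => (hbij G hG).1 (by simp [hg])⟩
  -- a section of `θ` is glued from lifts of the injections of a compact presentation of `B`
  obtain ⟨J, F, c, ⟨hc⟩, -, hcpt, ⟨e⟩⟩ := hacc.2.1 B
  choose l hl using fun j => (hbij _ (hcpt j)).2 (c.ι.app j ≫ e.hom)
  let s : c.pt ⟶ A := hc.desc
    { pt := A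
      ι := { app := l
             naturality := fun j j' φ => (hbij _ (hcpt j)).1 (by simp [hl, reassoc_of% (c.w φ)]) } }
  have hs : s ≫ θ = e.hom := hc.hom_ext fun j => by simp [s, hl]
  have : IsSplitEpi θ := ⟨⟨e.inv ≫ s, by simp [hs]⟩⟩
  exact isIso_of_mono_of_isSplitEpi θ

noncomputable def isColimitOfIsColimitMapCoconeCoyoneda (hacc : IsCardinalAccessible κ C)
    {J : Cat.{w, w}} (hJ : IsCardinalFiltered κ J) {K : J ⥤ C} (s : Cocone K)
    (h : ∀ G, IsCardinalCompact κ G → IsColimit ((coyoneda.obj (op G)).mapCocone s)) :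
    IsColimit s :=
  have := hacc.1 J hJ
  have : IsIso ((colimit.isColimit K).desc s) := hacc.isIso_of_isIso_coyoneda_map _ fun G hG => by
    obtain ⟨_⟩ := hG J hJ
    let P := isColimitOfPreserves (coyoneda.obj (op G)) (colimit.isColimit K)
    have hθ : (coyoneda.obj (op G)).map ((colimit.isColimit K).desc s) =
        (P.coconePointUniqueUpToIso (h G hG)).hom :=
      P.hom_ext fun j => by rw [IsColimit.comp_coconePointUniqueUpToIso_hom]; ext x; simp
    rw [hθ]; infer_instance
  IsColimit.ofPointIso (colimit.isColimit K)

end IsCardinalAccessible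

section

variable {C : Type u} [Category.{v} C] [HasPullbacks C] {c d : C} (f : c ⟶ d)

lemma CategoryTheory.Over.pullback_map_left_fst {X Y : Over d} (h : X ⟶ Y) :
    ((Over.pullback f).map h).left ≫ pullback.fst Y.hom f = pullback.fst X.hom f ≫ h.left :=
  pullback.lift_fst _ _ _

lemma CategoryTheory.Over.pullback_map_left_snd {X Y : Over d} (h : X ⟶ Y) :
    ((Over.pullback f).map h).left ≫ pullback.snd Y.hom f = pullback.snd X.hom f :=
  pullback.lift_snd _ _ _

noncomputable def isColimitMapCoconeCoyonedaPullback {J : Type*} [Category J] [IsFiltered J]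
    {F : J ⥤ Over d} (t : Cocone F) (G : C)
    (ht : IsColimit ((coyoneda.obj (op G)).mapCocone ((Over.forget d).mapCocone t))) :
    IsColimit ((coyoneda.obj (op G)).mapCocone
      ((Over.pullback f ⋙ Over.forget c).mapCocone t)) := by
  refine Types.FilteredColimit.isColimitOf' _ _ (fun x => ?_) (fun i x y hxy => ?_)
  · change G ⟶ pullback t.pt.hom f at x
    obtain ⟨j, y, hy⟩ := Types.jointly_surjective _ ht (x ≫ pullback.fst _ _)
    change G ⟶ (F.obj j).left at y
    change y ≫ (t.ι.app j).left = x ≫ pullback.fst _ _ at hy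
    have w : (t.ι.app j).left ≫ t.pt.hom = (F.obj j).hom := Over.w (t.ι.app j)
    have hyx : y ≫ (F.obj j).hom = (x ≫ pullback.snd _ _) ≫ f := by
      rw [← w, reassoc_of% hy, pullback.condition, Category.assoc]
    refine ⟨j, pullback.lift y (x ≫ pullback.snd _ _) hyx, ?_⟩
    change x = _ ≫ ((Over.pullback f).map (t.ι.app j)).left
    apply pullback.hom_ext
    · rw [Category.assoc, Over.pullback_map_left_fst f (Y := t.pt), pullback.lift_fst_assoc, hy]
    · rw [Category.assoc, Over.pullback_map_left_snd f (Y := t.pt), pullback.lift_snd]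
  · change G ⟶ pullback (F.obj i).hom f at x y
    change x ≫ ((Over.pullback f).map (t.ι.app i)).left =
      y ≫ ((Over.pullback f).map (t.ι.app i)).left at hxy
    have hfst : (x ≫ pullback.fst _ _) ≫ (t.ι.app i).left =
        (y ≫ pullback.fst _ _) ≫ (t.ι.app i).left := by
      simpa only [Category.assoc, Over.pullback_map_left_fst] using hxy =≫ pullback.fst _ _
    have hsnd : x ≫ pullback.snd _ _ = y ≫ pullback.snd _ _ := by
      simpa only [Category.assoc, Over.pullback_map_left_snd] using hxy =≫ pullback.snd _ _
    obtain ⟨k, a, ha⟩ := (Types.FilteredColimit.isColimit_eq_iff' ht _ _).1 hfst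
    change (x ≫ pullback.fst _ _) ≫ (F.map a).left =
      (y ≫ pullback.fst _ _) ≫ (F.map a).left at ha
    refine ⟨k, a, ?_⟩
    change x ≫ ((Over.pullback f).map (F.map a)).left =
      y ≫ ((Over.pullback f).map (F.map a)).left
    apply pullback.hom_ext
    · simpa only [Category.assoc, Over.pullback_map_left_fst] using ha
    · simpa only [Category.assoc, Over.pullback_map_left_snd] using hsnd

end

theorem statement5_general {C : Type u} [Category.{v} C] [HasFiniteLimits C]
    (κ : Cardinal.{w}) (hκ : κ.IsRegular) (hacc : IsCardinalAccessible κ C)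
    {c d : C} (f : c ⟶ d) (J : Cat.{w, w}) (hJ : IsCardinalFiltered κ J) :
    Nonempty (PreservesColimitsOfShape J (Over.pullback f)) := by
  have := hJ.isFiltered hκ.aleph0_le
  have : PreservesColimitsOfShape J (Over.pullback f ⋙ Over.forget c) :=
    ⟨fun {_} => ⟨fun {t} ht => ⟨hacc.isColimitOfIsColimitMapCoconeCoyoneda hJ _ fun G hG =>
      have := (hG J hJ).some
      isColimitMapCoconeCoyonedaPullback f t G
        (isColimitOfPreserves _ (isColimitOfPreserves (Over.forget d) ht))⟩⟩⟩
  exact ⟨preservesColimitsOfShape_of_reflects_of_preserves _ (Over.forget c)⟩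

theorem statement5 {C : Type u} [Category.{v} C] [HasFiniteLimits C]
    (κ : Cardinal.{w}) (hκ : κ.IsRegular) (hacc : IsCardinalAccessible κ C)
    (hprod : ∀ (Y : C) (J : Cat.{w, w}), IsCardinalFiltered κ J →
      Nonempty (PreservesColimitsOfShape J (prod.functor.obj Y)))
    {c d : C} (f : c ⟶ d) (J : Cat.{w, w}) (hJ : IsCardinalFiltered κ J) :
    Nonempty (PreservesColimitsOfShape J (Over.pullback f)) :=
  statement5_general κ hκ hacc f J hJ
end

section
/- Let p : E → B be a functor between categories satisfying: (1) E has finite limits and p preserves them; (2) p has a right adjoint r : B → E such that p ∘ r is isomorphic to the identity on B. Then p is a Grothendieck fibration (every morphism f : b → p(x) in B admits a Cartesian lift with target x). -/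
/-!
STATEMENT 9: If `p : E ⥤ B` preserves the finite limits of `E` and has a right
adjoint `r` with `p ∘ r ≅ id`, then `p` is a Grothendieck fibration: every
`f : b ⟶ p x` admits a Cartesian lift with target `x`.
-/

open CategoryTheory CategoryTheory.Limits

universe v u v' u'

/-- A morphism `φ : y ⟶ x` is `p`-Cartesian if the square of hom-sets
`E(z,y) → E(z,x) ×_{B(pz,px)} B(pz,py)` is a pullback for every `z`, expressed
elementwise via unique lifting. -/
def IsCartesianMor {E : Type u} [Category.{v} E] {B : Type u'} [Category.{v'} B]
    (p : E ⥤ B) {y x : E} (φ : y ⟶ x) : Prop :=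
  ∀ {z : E} (g : z ⟶ x) (u : p.obj z ⟶ p.obj y), u ≫ p.map φ = p.map g →
    ∃! v : z ⟶ y, v ≫ φ = g ∧ p.map v = u

theorem statement9 {E : Type u} [Category.{v} E] {B : Type u'} [Category.{v'} B]
    (p : E ⥤ B) [HasFiniteLimits E] [PreservesFiniteLimits p]
    (r : B ⥤ E) (adj : p ⊣ r) (hretr : Nonempty (r ⋙ p ≅ 𝟭 B)) :
    ∀ (x : E) (b : B) (f : b ⟶ p.obj x),
      ∃ (y : E) (φ : y ⟶ x) (e : p.obj y ≅ b),
        IsCartesianMor p φ ∧ p.map φ = e.hom ≫ f := by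
  obtain ⟨j⟩ := hretr
  haveI : IsIso adj.counit := adj.isIso_counit_of_iso j
  intro x b f
  let y : E := pullback (adj.unit.app x) (r.map f)
  let φ : y ⟶ x := pullback.fst _ _
  let ψ : y ⟶ r.obj b := pullback.snd _ _
  have hsq : IsPullback φ ψ (adj.unit.app x) (r.map f) := IsPullback.of_hasPullback _ _
  have hsqB : IsPullback (p.map φ) (p.map ψ) (p.map (adj.unit.app x)) (p.map (r.map f)) :=
    hsq.map p
  have htri : p.map (adj.unit.app x) ≫ adj.counit.app (p.obj x) = 𝟙 _ :=
    adj.left_triangle_components x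
  haveI : IsIso (p.map (adj.unit.app x)) := by
    have h : p.map (adj.unit.app x) = inv (adj.counit.app (p.obj x)) := by
      rw [← cancel_mono (adj.counit.app (p.obj x)), htri, IsIso.inv_hom_id]
    rw [h]; infer_instance
  have hsq' : IsPullback (p.map (r.map f) ≫ inv (p.map (adj.unit.app x))) (𝟙 _)
      (p.map (adj.unit.app x)) (p.map (r.map f)) :=
    IsPullback.of_vert_isIso ⟨by simp⟩
  haveI hψiso : IsIso (p.map ψ) := by
    have h := hsqB.isoIsPullback_hom_snd _ _ hsq'
    rw [Category.comp_id] at h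
    rw [← h]; infer_instance
  -- the key factorization of `p.map φ`
  have hpφ : p.map φ = p.map ψ ≫ adj.counit.app b ≫ f := by
    have hnat : p.map (r.map f) ≫ adj.counit.app (p.obj x) = adj.counit.app b ≫ f :=
      adj.counit.naturality f
    calc p.map φ = p.map φ ≫ p.map (adj.unit.app x) ≫ adj.counit.app (p.obj x) := by
          rw [htri]; simp
      _ = (p.map φ ≫ p.map (adj.unit.app x)) ≫ adj.counit.app (p.obj x) := by
          rw [Category.assoc]
      _ = (p.map ψ ≫ p.map (r.map f)) ≫ adj.counit.app (p.obj x) := by rw [hsqB.w]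
      _ = p.map ψ ≫ adj.counit.app b ≫ f := by rw [Category.assoc, hnat]
  let e : p.obj y ≅ b := asIso (p.map ψ ≫ adj.counit.app b)
  refine ⟨y, φ, e, ?_, by simpa [e] using hpφ⟩
  intro z g u hu
  -- the candidate second component
  let w : z ⟶ r.obj b := adj.homEquiv z b (u ≫ p.map ψ ≫ adj.counit.app b)
  have hwdef : w = adj.unit.app z ≫ r.map (u ≫ p.map ψ ≫ adj.counit.app b) :=
    adj.homEquiv_unit _ _ _
  have hw : g ≫ adj.unit.app x = w ≫ r.map f := by
    have h2 : (u ≫ p.map ψ ≫ adj.counit.app b) ≫ f = p.map g := by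
      rw [← hu, hpφ]; simp
    rw [hwdef, Category.assoc, ← r.map_comp, h2]
    simp
  let v : z ⟶ y := pullback.lift g w hw
  have hvφ : v ≫ φ = g := pullback.lift_fst _ _ _
  have hvψ : v ≫ ψ = w := pullback.lift_snd _ _ _
  have hsymm : ∀ (w' : z ⟶ r.obj b),
      (adj.homEquiv z b).symm w' = p.map w' ≫ adj.counit.app b := fun w' => by
    simp [Adjunction.homEquiv_counit]
  have hpv : p.map v = u := by
    have h1 : p.map v ≫ p.map ψ ≫ adj.counit.app b = u ≫ p.map ψ ≫ adj.counit.app b := by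
      have hcmp : p.map v ≫ p.map ψ = p.map w := by rw [← p.map_comp, hvψ]
      rw [← Category.assoc, hcmp, ← hsymm]
      exact (adj.homEquiv z b).symm_apply_apply _
    have : p.map v ≫ e.hom = u ≫ e.hom := by simpa [e] using h1
    exact (cancel_mono e.hom).mp this
  refine ⟨v, ⟨hvφ, hpv⟩, ?_⟩
  rintro v' ⟨hv'1, hv'2⟩
  apply pullback.hom_ext
  · rw [hvφ]; exact hv'1
  · rw [hvψ]
    apply (adj.homEquiv z b).symm.injective
    rw [hsymm]
    have h2 : (adj.homEquiv z b).symm w = u ≫ p.map ψ ≫ adj.counit.app b :=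
      (adj.homEquiv z b).symm_apply_apply _
    rw [h2, p.map_comp, hv'2, Category.assoc]
end

section
/- Let p : X → S be a coCartesian fibration of (∞-)categories (Grothendieck opfibration in the 1-categorical case), K a simplicial set (diagram shape), and r̄ : K^▷ → Fun(Δ¹, X) a colimit diagram in the arrow category such that for every vertex i ∈ K the edge r̄(i,0) → r̄(i,1) is p-coCartesian. Then the edge r̄(∞,0) → r̄(∞,1) at the cone point is also p-coCartesian. In other words, p-coCartesian morphisms are closed under colimits in the arrow category computed pointwise. -/
/-!
STATEMENT 19: For a coCartesian fibration (Grothendieck opfibration) `p : X ⥤ S`,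
coCartesian morphisms are closed under (pointwise) colimits in the arrow category:
if a colimit cocone in `Arrow X` (computed pointwise at source and target) consists
of `p`-coCartesian arrows, then the arrow at the cone point is `p`-coCartesian.
-/

open CategoryTheory CategoryTheory.Limits

universe w' w v u v' u'

/-- A morphism `φ : x ⟶ y` is `p`-coCartesian if the square of hom-sets
`X(y,z) → X(x,z) ×_{S(px,pz)} S(py,pz)` is a pullback for every `z`, expressed
elementwise via unique lifting. -/
def IsCoCartesianMor {X : Type u} [Category.{v} X] {S : Type u'} [Category.{v'} S]
    (p : X ⥤ S) {x y : X} (φ : x ⟶ y) : Prop :=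
  ∀ {z : X} (g : x ⟶ z) (u : p.obj y ⟶ p.obj z), p.map φ ≫ u = p.map g →
    ∃! v : y ⟶ z, φ ≫ v = g ∧ p.map v = u

/-- `p` is a coCartesian fibration (Grothendieck opfibration): every morphism out of
the image of an object admits a coCartesian lift. -/
def IsOpfibration {X : Type u} [Category.{v} X] {S : Type u'} [Category.{v'} S]
    (p : X ⥤ S) : Prop :=
  ∀ ⦃x : X⦄ ⦃b : S⦄ (f : p.obj x ⟶ b),
    ∃ (y : X) (φ : x ⟶ y) (h : p.obj y = b),
      IsCoCartesianMor p φ ∧ p.map φ = f ≫ eqToHom h.symm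

/-!
Let `φ : c.pt.left ⟶ c.pt.right` be the arrow at the cone point and `χ : c.pt.left ⟶ w` a
coCartesian lift of `p.map φ`; then `φ = χ ≫ t` for some `t` lying over the identity. Since
the components of the diagram are coCartesian, compatible lifts out of them glue along the
pointwise colimits, giving `s : c.pt.right ⟶ w` with `φ ≫ s = χ`. Gluing is unique once its
image under `p` is prescribed on each component, which forces `s ≫ t = 𝟙`; then `t ≫ s = 𝟙`
because `χ` is coCartesian. So `φ` is a coCartesian morphism followed by an isomorphism.
-/

namespace IsCoCartesianMor

variable {X : Type u} [Category.{v} X] {S : Type u'} [Category.{v'} S] {p : X ⥤ S}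

theorem hom_ext {x y z : X} {φ : x ⟶ y} (hφ : IsCoCartesianMor p φ) {v₁ v₂ : y ⟶ z}
    (h : φ ≫ v₁ = φ ≫ v₂) (hp : p.map v₁ = p.map v₂) : v₁ = v₂ :=
  (hφ (φ ≫ v₂) (p.map v₂) (p.map_comp _ _).symm).unique ⟨h, hp⟩ ⟨rfl, rfl⟩

theorem comp_isIso {x y w : X} {χ : x ⟶ w} (hχ : IsCoCartesianMor p χ) (t : w ⟶ y) [IsIso t] :
    IsCoCartesianMor p (χ ≫ t) := by
  intro z g u hu
  obtain ⟨v, ⟨hχv, hpv⟩, hv⟩ := hχ g (p.map t ≫ u) (by rw [← Category.assoc, ← p.map_comp, hu])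
  refine ⟨inv t ≫ v, ⟨by simpa using hχv, by simp [hpv]⟩, fun v' ⟨hv'g, hv'u⟩ => ?_⟩
  rw [IsIso.eq_inv_comp, hv (t ≫ v') ⟨by simpa using hv'g, by simp [hv'u]⟩]

end IsCoCartesianMor

section PointwiseColimit

variable {X : Type u} [Category.{v} X] {S : Type u'} [Category.{v'} S] {p : X ⥤ S}
  {J : Type w} [Category.{w'} J] {F : J ⥤ Arrow X} {c : Cocone F}

theorem Arrow.cocone_ι_app_w (j : J) :
    (c.ι.app j).left ≫ c.pt.hom = (F.obj j).hom ≫ (c.ι.app j).right :=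
  Arrow.w (c.ι.app j)

theorem hom_ext_of_isColimit_right_of_isCoCartesianMor
    (H₁ : IsColimit (Arrow.rightFunc.mapCocone c))
    (hF : ∀ j, IsCoCartesianMor p (F.obj j).hom) {z : X} {v₁ v₂ : c.pt.right ⟶ z}
    (h : c.pt.hom ≫ v₁ = c.pt.hom ≫ v₂)
    (hp : ∀ j, p.map ((c.ι.app j).right ≫ v₁) = p.map ((c.ι.app j).right ≫ v₂)) :
    v₁ = v₂ :=
  H₁.hom_ext fun j => by
    have hφ :
        (F.obj j).hom ≫ (c.ι.app j).right ≫ v₁ = (F.obj j).hom ≫ (c.ι.app j).right ≫ v₂ := by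
      simp only [← Category.assoc, ← Arrow.cocone_ι_app_w]
      simp only [Category.assoc, h]
    exact IsCoCartesianMor.hom_ext (hF j) hφ (hp j)

theorem exists_desc_of_isColimit_of_isCoCartesianMor
    (H₀ : IsColimit (Arrow.leftFunc.mapCocone c)) (H₁ : IsColimit (Arrow.rightFunc.mapCocone c))
    (hF : ∀ j, IsCoCartesianMor p (F.obj j).hom) {z : X} (g : c.pt.left ⟶ z)
    (u : p.obj c.pt.right ⟶ p.obj z) (hu : p.map c.pt.hom ≫ u = p.map g) :
    ∃ v : c.pt.right ⟶ z, c.pt.hom ≫ v = g ∧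
      ∀ j, p.map ((c.ι.app j).right ≫ v) = p.map (c.ι.app j).right ≫ u := by
  have hcompat (j : J) :
      p.map (F.obj j).hom ≫ p.map (c.ι.app j).right ≫ u = p.map ((c.ι.app j).left ≫ g) := by
    rw [← Category.assoc, ← p.map_comp, ← Arrow.cocone_ι_app_w, p.map_comp, Category.assoc, hu,
      p.map_comp]
  choose v hv using fun j => ((hF j) _ _ (hcompat j)).exists
  have hnat {i j : J} (f : i ⟶ j) : (F.map f).right ≫ v j = v i := by
    refine IsCoCartesianMor.hom_ext (hF i) ?_ ?_
    · rw [← Arrow.w_assoc (F.map f), (hv j).1, (hv i).1, ← Category.assoc, ← Arrow.comp_left,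
        Cocone.w]
    · rw [p.map_comp, (hv j).2, (hv i).2, ← Category.assoc, ← p.map_comp, ← Arrow.comp_right,
        Cocone.w]
  let D : Cocone (F ⋙ Arrow.rightFunc) :=
    { pt := z
      ι := { app := v, naturality := fun i j f => (hnat f).trans (Category.comp_id _).symm } }
  let d : c.pt.right ⟶ z := H₁.desc D
  have hfac (j : J) : (c.ι.app j).right ≫ d = v j := H₁.fac D j
  refine ⟨d, H₀.hom_ext fun j => ?_, fun j => by rw [hfac, (hv j).2]⟩
  calc (c.ι.app j).left ≫ c.pt.hom ≫ d = (F.obj j).hom ≫ (c.ι.app j).right ≫ d := by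
        rw [← Category.assoc, Arrow.cocone_ι_app_w, Category.assoc]
    _ = (c.ι.app j).left ≫ g := by rw [hfac, (hv j).1]

end PointwiseColimit

theorem statement19_general {X : Type u} [Category.{v} X] {S : Type u'} [Category.{v'} S]
    (p : X ⥤ S) (hp : IsOpfibration p)
    {J : Type w} [Category.{w'} J] (F : J ⥤ Arrow X) (c : Cocone F)
    (h0 : Nonempty (IsColimit (Arrow.leftFunc.mapCocone c)))
    (h1 : Nonempty (IsColimit (Arrow.rightFunc.mapCocone c)))
    (hco : ∀ j : J, IsCoCartesianMor p (F.obj j).hom) :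
    IsCoCartesianMor p c.pt.hom := by
  obtain ⟨H₀⟩ := h0
  obtain ⟨H₁⟩ := h1
  obtain ⟨w, χ, hw, hχ, hpχ⟩ := hp (p.map c.pt.hom)
  obtain ⟨t, ⟨hχt, hpt⟩, -⟩ := hχ c.pt.hom (eqToHom hw) (by simp [hpχ])
  obtain ⟨s, hs, hps⟩ :=
    exists_desc_of_isColimit_of_isCoCartesianMor H₀ H₁ hco χ (eqToHom hw.symm) hpχ.symm
  have hst : s ≫ t = 𝟙 c.pt.right :=
    hom_ext_of_isColimit_right_of_isCoCartesianMor H₁ hco (by simp [reassoc_of% hs, hχt])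
      fun j => by rw [← Category.assoc, p.map_comp, hps, hpt]; simp
  have hps' : p.map s = eqToHom hw.symm := by
    simpa [hpt, comp_eqToHom_iff] using congrArg p.map hst
  have hts : t ≫ s = 𝟙 w := hχ.hom_ext (by simp [reassoc_of% hχt, hs]) (by simp [hpt, hps'])
  have : IsIso t := ⟨s, hts, hst⟩
  rw [← hχt]
  apply hχ.comp_isIso

theorem statement19 {X : Type u} [Category.{v} X] {S : Type u'} [Category.{v'} S]
    (p : X ⥤ S) (hp : IsOpfibration p)
    {J : Type w} [Category.{w'} J] (F : J ⥤ Arrow X) (c : Cocone F)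
    (hc : Nonempty (IsColimit c))
    (h0 : Nonempty (IsColimit (Arrow.leftFunc.mapCocone c)))
    (h1 : Nonempty (IsColimit (Arrow.rightFunc.mapCocone c)))
    (hco : ∀ j : J, IsCoCartesianMor p (F.obj j).hom) :
    IsCoCartesianMor p c.pt.hom :=
  statement19_general p hp F c h0 h1 hco
end
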